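/- For ℓ > 0, the normalized deficiency vectors g₊(t) = √2 e^t/√(e^{2ℓ}−1), g₋(t) = √2 e^{−t}/√(1−e^{−2ℓ}) in L²(0,ℓ), and the general deficiency element g_z(t) = e^{−izt} (Im z > 0), satisfy: ((z−i)/(z+i))·⟨g_z, g₋⟩/⟨g_z, g₊⟩ = (e^ℓ − e^{−iℓz})/(1 − e^ℓ e^{−iℓz}), i.e., the Livšic function of the pair (Ȧ, A) equals s(z) = (e^ℓ − e^{−iℓz})/(1 − e^ℓ e^{−iℓz}). -/

import Mathlib

open Complex

/-- For `ℓ > 0`, `Im z > 0`, with normalized deficiency vectors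
`g₊(t) = √2 eᵗ/√(e^{2ℓ}−1)`, `g₋(t) = √2 e^{−t}/√(1−e^{−2ℓ})` and
`g_z(t) = e^{−izt}` in `L²(0,ℓ)`, the Livšic function equals
`((z−i)/(z+i))·⟨g_z,g₋⟩/⟨g_z,g₊⟩ = (e^ℓ − e^{−iℓz})/(1 − e^ℓ e^{−iℓz})`. -/
theorem stmt_18 (ℓ : ℝ) (hℓ : 0 < ℓ) (z : ℂ) (hz : 0 < z.im) :
    ((z - Complex.I) / (z + Complex.I)) *
        ((∫ t in (0:ℝ)..ℓ, Complex.exp (-Complex.I * z * t) *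
            ((Real.sqrt 2 * Real.exp (-t) / Real.sqrt (1 - Real.exp (-(2 * ℓ))) : ℝ) : ℂ)) /
          (∫ t in (0:ℝ)..ℓ, Complex.exp (-Complex.I * z * t) *
            ((Real.sqrt 2 * Real.exp t / Real.sqrt (Real.exp (2 * ℓ) - 1) : ℝ) : ℂ))) =
      ((Real.exp ℓ : ℂ) - Complex.exp (-Complex.I * ℓ * z)) /
        (1 - (Real.exp ℓ : ℂ) * Complex.exp (-Complex.I * ℓ * z)) := by
  rcases eq_or_ne z Complex.I with rfl | hzI
  · rw [show Complex.exp (-Complex.I * (ℓ:ℂ) * Complex.I) = ((Real.exp ℓ : ℝ) : ℂ) by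
      rw [show -Complex.I * (ℓ:ℂ) * Complex.I = (ℓ:ℂ) by
        linear_combination (-(ℓ:ℂ)) * Complex.I_mul_I]
      exact (Complex.ofReal_exp ℓ).symm]
    simp
  · -- exponents
    set a : ℂ := -Complex.I * z - 1 with ha_def
    set b : ℂ := -Complex.I * z + 1 with hb_def
    have hzmI : z - Complex.I ≠ 0 := sub_ne_zero.mpr hzI
    have hzpI : z + Complex.I ≠ 0 := by
      intro h
      have := congrArg Complex.im h
      simp at this
      linarith
    have ha_eq : a = -Complex.I * (z - Complex.I) := by
      rw [ha_def]; linear_combination (-1:ℂ) * Complex.I_mul_I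
    have hb_eq : b = -Complex.I * (z + Complex.I) := by
      rw [hb_def]; linear_combination Complex.I_mul_I
    have ha : a ≠ 0 := by
      rw [ha_eq]; exact mul_ne_zero (neg_ne_zero.mpr Complex.I_ne_zero) hzmI
    have hb : b ≠ 0 := by
      rw [hb_eq]; exact mul_ne_zero (neg_ne_zero.mpr Complex.I_ne_zero) hzpI
    -- positivity of sqrt constants
    have hsm : (0:ℝ) < Real.sqrt (1 - Real.exp (-(2 * ℓ))) := by
      apply Real.sqrt_pos.mpr
      have : Real.exp (-(2 * ℓ)) < 1 := Real.exp_lt_one_iff.mpr (by linarith)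
      linarith
    have hsp : (0:ℝ) < Real.sqrt (Real.exp (2 * ℓ) - 1) := by
      apply Real.sqrt_pos.mpr
      have : 1 < Real.exp (2 * ℓ) := by rw [← Real.exp_zero]; exact Real.exp_lt_exp.mpr (by linarith)
      linarith
    have hsplit : Real.sqrt (Real.exp (2 * ℓ) - 1)
        = Real.exp ℓ * Real.sqrt (1 - Real.exp (-(2 * ℓ))) := by
      rw [← Real.sqrt_sq (Real.exp_pos ℓ).le, ← Real.sqrt_mul (sq_nonneg _)]
      congr 1
      rw [sq, ← Real.exp_add, Real.exp_neg, show ℓ + ℓ = 2 * ℓ by ring,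
        mul_sub, mul_one, mul_inv_cancel₀ (Real.exp_pos _).ne']
    -- compute the two integrals
    have hint : ∀ c : ℂ, c ≠ 0 →
        (∫ t in (0:ℝ)..ℓ, Complex.exp (c * t)) = (Complex.exp (c * ℓ) - 1) / c := by
      intro c hc
      rw [integral_exp_mul_complex hc]
      simp
    have keym : (∫ t in (0:ℝ)..ℓ, Complex.exp (-Complex.I * z * t) *
          ((Real.sqrt 2 * Real.exp (-t) / Real.sqrt (1 - Real.exp (-(2 * ℓ))) : ℝ) : ℂ))
        = ((Real.sqrt 2 : ℂ) / (Real.sqrt (1 - Real.exp (-(2 * ℓ))) : ℂ))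
            * ((Complex.exp (a * ℓ) - 1) / a) := by
      rw [← hint a ha, ← intervalIntegral.integral_const_mul]
      apply intervalIntegral.integral_congr
      intro t _
      push_cast
      rw [show a * (t:ℂ) = -Complex.I * z * t + (-(t:ℂ)) by rw [ha_def]; ring,
        Complex.exp_add]
      ring
    have keyp : (∫ t in (0:ℝ)..ℓ, Complex.exp (-Complex.I * z * t) *
          ((Real.sqrt 2 * Real.exp t / Real.sqrt (Real.exp (2 * ℓ) - 1) : ℝ) : ℂ))
        = ((Real.sqrt 2 : ℂ) / (Real.sqrt (Real.exp (2 * ℓ) - 1) : ℂ))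
            * ((Complex.exp (b * ℓ) - 1) / b) := by
      rw [← hint b hb, ← intervalIntegral.integral_const_mul]
      apply intervalIntegral.integral_congr
      intro t _
      push_cast
      rw [show b * (t:ℂ) = -Complex.I * z * t + (t:ℂ) by rw [hb_def]; ring,
        Complex.exp_add]
      ring
    rw [keym, keyp]
    -- rewrite the exponentials
    set E : ℂ := Complex.exp (-Complex.I * ℓ * z) with hE_def
    have hEne : E ≠ 0 := Complex.exp_ne_zero _
    have hexpa : Complex.exp (a * ℓ) = E * ((Real.exp ℓ : ℂ))⁻¹ := by
      rw [hE_def, show (((Real.exp ℓ : ℝ)) : ℂ)⁻¹ = Complex.exp (-(ℓ:ℂ)) by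
        rw [Complex.ofReal_exp, ← Complex.exp_neg], ← Complex.exp_add]
      congr 1
      rw [ha_def]; ring
    have hexpb : Complex.exp (b * ℓ) = E * (Real.exp ℓ : ℂ) := by
      rw [hE_def, Complex.ofReal_exp, ← Complex.exp_add]
      congr 1
      rw [hb_def]; ring
    have hre : (Real.exp ℓ : ℂ) ≠ 0 := by
      exact_mod_cast (Real.exp_pos ℓ).ne'
    have hden : 1 - (Real.exp ℓ : ℂ) * E ≠ 0 := by
      intro h
      have h1 : (Real.exp ℓ : ℂ) * E = 1 := by linear_combination -h
      have h2 : ‖(Real.exp ℓ : ℂ) * E‖ = 1 := by rw [h1]; simp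
      rw [norm_mul, hE_def, Complex.norm_exp, Complex.norm_real, Real.norm_eq_abs,
        abs_of_pos (Real.exp_pos ℓ)] at h2
      have hre2 : (-Complex.I * (ℓ:ℂ) * z).re = ℓ * z.im := by
        simp [Complex.mul_re, Complex.mul_im]
      rw [hre2, ← Real.exp_add] at h2
      have h3 : (1:ℝ) < Real.exp (ℓ + ℓ * z.im) := by
        rw [← Real.exp_zero]
        exact Real.exp_lt_exp.mpr (by nlinarith)
      linarith
    have hEb : Complex.exp (b * ℓ) - 1 ≠ 0 := by
      rw [hexpb]
      intro h
      apply hden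
      have : E * (Real.exp ℓ : ℂ) = 1 := by linear_combination h
      linear_combination -this
    have hsqrt2 : ((Real.sqrt 2 : ℝ) : ℂ) ≠ 0 := by
      exact_mod_cast (Real.sqrt_pos.mpr (by norm_num)).ne'
    have hsmc : ((Real.sqrt (1 - Real.exp (-(2 * ℓ))) : ℝ) : ℂ) ≠ 0 := by
      exact_mod_cast hsm.ne'
    have hEb' : E * (Real.exp ℓ : ℂ) - 1 ≠ 0 := by rw [← hexpb]; exact hEb
    have hbne : -Complex.I * (z + Complex.I) ≠ 0 := by rw [← hb_eq]; exact hb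
    have hane : -Complex.I * (z - Complex.I) ≠ 0 := by rw [← ha_eq]; exact ha
    rw [hexpa, hexpb, hsplit, Complex.ofReal_mul, ha_eq, hb_eq]
    have aux : ∀ w₁ w₂ c₁ c₂ A B : ℂ, w₁ ≠ 0 → w₂ ≠ 0 → c₂ ≠ 0 → B ≠ 0 →
        w₁ / w₂ * ((c₁ * (A / (-Complex.I * w₁))) / (c₂ * (B / (-Complex.I * w₂))))
          = (c₁ * A) / (c₂ * B) := by
      intro w₁ w₂ c₁ c₂ A B h₁ h₂ hc₂ hB
      field_simp [Complex.I_ne_zero]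
    rw [aux (z - Complex.I) (z + Complex.I) _ _ _ _ hzmI hzpI
      (div_ne_zero hsqrt2 (mul_ne_zero hre hsmc)) hEb']
    rw [div_eq_div_iff (mul_ne_zero (div_ne_zero hsqrt2 (mul_ne_zero hre hsmc)) hEb') hden]
    field_simp [hsqrt2, hsmc, hre]
    ring
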